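/- Let W, M, M̂ be n×n real matrices with W⊙M̂ invertible, let x ∈ ℝⁿ, and let x̂ = (W⊙M̂)⁻¹ (W⊙M) x. Then ‖x − x̂‖ ≥ (σ_min(W⊙(M̂−M)) / σ_max(W⊙M̂)) · ‖x‖, where ⊙ is the Hadamard product, σ_min(A) := inf_{‖v‖=1} ‖Av‖, and σ_max(A) := sup_{‖v‖=1} ‖Av‖ with respect to the Euclidean norm. -/

import Mathlib

open Matrix

/-- The Euclidean norm of a vector in `ℝⁿ`. -/
noncomputable def euclNorm {n : ℕ} (x : Fin n → ℝ) : ℝ :=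
  Real.sqrt (∑ i, x i ^ 2)

/-- `σ_min(A) = inf_{‖v‖ = 1} ‖A v‖` (with respect to the Euclidean norm). -/
noncomputable def sigmaMin {n : ℕ} (A : Matrix (Fin n) (Fin n) ℝ) : ℝ :=
  ⨅ v : {v : Fin n → ℝ // euclNorm v = 1}, euclNorm (A *ᵥ (v : Fin n → ℝ))

/-- `σ_max(A) = sup_{‖v‖ = 1} ‖A v‖` (the Euclidean operator norm). -/
noncomputable def sigmaMax {n : ℕ} (A : Matrix (Fin n) (Fin n) ℝ) : ℝ :=
  ⨆ v : {v : Fin n → ℝ // euclNorm v = 1}, euclNorm (A *ᵥ (v : Fin n → ℝ))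

/-!
The Hadamard structure plays no role: with `B = W ⊙ M̂` and `C = W ⊙ M` we have `W ⊙ (M̂ - M) = B - C`
and `B (x - B⁻¹ C x) = (B - C) x`, so
`σ_min(B - C) ‖x‖ ≤ ‖(B - C) x‖ = ‖B (x - x̂)‖ ≤ σ_max(B) ‖x - x̂‖`.
Dividing by `σ_max(B)` gives the claim; when `σ_max(B) = 0` the bound is `0` since `r / 0 = 0`.
-/

theorem Matrix.hadamard_sub {m k α : Type*} [NonUnitalNonAssocRing α] (A B C : Matrix m k α) :
    A ⊙ (B - C) = A ⊙ B - A ⊙ C := by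
  ext i j
  simp only [hadamard_apply, sub_apply, mul_sub]

section EuclNorm

variable {n : ℕ}

lemma euclNorm_eq_norm (x : Fin n → ℝ) : euclNorm x = ‖WithLp.toLp 2 x‖ := by
  simp [euclNorm, EuclideanSpace.norm_eq]

lemma euclNorm_nonneg (x : Fin n → ℝ) : 0 ≤ euclNorm x :=
  Real.sqrt_nonneg _

lemma euclNorm_smul (c : ℝ) (x : Fin n → ℝ) : euclNorm (c • x) = |c| * euclNorm x := by
  rw [euclNorm_eq_norm, euclNorm_eq_norm, WithLp.toLp_smul, norm_smul, Real.norm_eq_abs]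

lemma euclNorm_pos {x : Fin n → ℝ} (hx : x ≠ 0) : 0 < euclNorm x := by
  rw [euclNorm_eq_norm, norm_pos_iff]
  exact fun h => hx (by simpa using congrArg WithLp.ofLp h)

lemma euclNorm_inv_smul_self {x : Fin n → ℝ} (hx : x ≠ 0) :
    euclNorm ((euclNorm x)⁻¹ • x) = 1 := by
  have hpos := euclNorm_pos hx
  rw [euclNorm_smul, abs_of_pos (inv_pos.mpr hpos), inv_mul_cancel₀ hpos.ne']

lemma euclNorm_mulVec_eq_mul_euclNorm (A : Matrix (Fin n) (Fin n) ℝ) {x : Fin n → ℝ}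
    (hx : x ≠ 0) :
    euclNorm (A *ᵥ x) = euclNorm (A *ᵥ ((euclNorm x)⁻¹ • x)) * euclNorm x := by
  have hpos := euclNorm_pos hx
  rw [mulVec_smul, euclNorm_smul, abs_of_pos (inv_pos.mpr hpos)]
  field_simp

lemma euclNorm_mulVec_le_opNorm_mul (A : Matrix (Fin n) (Fin n) ℝ) (x : Fin n → ℝ) :
    euclNorm (A *ᵥ x) ≤ ‖toEuclideanCLM (𝕜 := ℝ) A‖ * euclNorm x := by
  rw [euclNorm_eq_norm, euclNorm_eq_norm, ← toEuclideanCLM_toLp]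
  exact (toEuclideanCLM (𝕜 := ℝ) A).le_opNorm _

end EuclNorm

section SingularValueBounds

variable {n : ℕ} (A : Matrix (Fin n) (Fin n) ℝ)

lemma sigmaMax_nonneg : 0 ≤ sigmaMax A :=
  Real.iSup_nonneg fun _ => euclNorm_nonneg _

lemma sigmaMin_mul_euclNorm_le (x : Fin n → ℝ) : sigmaMin A * euclNorm x ≤ euclNorm (A *ᵥ x) := by
  rcases eq_or_ne x 0 with rfl | hx
  · simp [euclNorm_eq_norm]
  rw [euclNorm_mulVec_eq_mul_euclNorm A hx]
  refine mul_le_mul_of_nonneg_right ?_ (euclNorm_nonneg x)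
  exact ciInf_le (f := fun v : {v : Fin n → ℝ // euclNorm v = 1} => euclNorm (A *ᵥ (v : Fin n → ℝ)))
    ⟨0, by rintro _ ⟨v, rfl⟩; exact euclNorm_nonneg _⟩ ⟨_, euclNorm_inv_smul_self hx⟩

lemma euclNorm_mulVec_le_sigmaMax_mul (x : Fin n → ℝ) :
    euclNorm (A *ᵥ x) ≤ sigmaMax A * euclNorm x := by
  rcases eq_or_ne x 0 with rfl | hx
  · simp [euclNorm_eq_norm]
  rw [euclNorm_mulVec_eq_mul_euclNorm A hx]
  refine mul_le_mul_of_nonneg_right ?_ (euclNorm_nonneg x)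
  refine le_ciSup (f := fun v : {v : Fin n → ℝ // euclNorm v = 1} => euclNorm (A *ᵥ (v : Fin n → ℝ)))
    ⟨‖toEuclideanCLM (𝕜 := ℝ) A‖, ?_⟩ ⟨_, euclNorm_inv_smul_self hx⟩
  rintro _ ⟨v, rfl⟩
  simpa [v.2] using euclNorm_mulVec_le_opNorm_mul A v

end SingularValueBounds

theorem sigmaMin_sub_div_sigmaMax_mul_le_euclNorm_sub {n : ℕ}
    (B C : Matrix (Fin n) (Fin n) ℝ) (hB : IsUnit B) (x : Fin n → ℝ) :
    sigmaMin (B - C) / sigmaMax B * euclNorm x ≤ euclNorm (x - B⁻¹ *ᵥ (C *ᵥ x)) := by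
  have hBx : B *ᵥ (x - B⁻¹ *ᵥ (C *ᵥ x)) = (B - C) *ᵥ x := by
    rw [mulVec_sub, mulVec_mulVec, mul_nonsing_inv B ((isUnit_iff_isUnit_det B).mp hB),
      one_mulVec, sub_mulVec]
  rw [div_mul_eq_mul_div]
  refine div_le_of_le_mul₀ (sigmaMax_nonneg B) (euclNorm_nonneg _) ?_
  calc sigmaMin (B - C) * euclNorm x ≤ euclNorm ((B - C) *ᵥ x) := sigmaMin_mul_euclNorm_le _ x
    _ = euclNorm (B *ᵥ (x - B⁻¹ *ᵥ (C *ᵥ x))) := by rw [hBx]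
    _ ≤ sigmaMax B * euclNorm (x - B⁻¹ *ᵥ (C *ᵥ x)) := euclNorm_mulVec_le_sigmaMax_mul B _
    _ = euclNorm (x - B⁻¹ *ᵥ (C *ᵥ x)) * sigmaMax B := mul_comm _ _

/-- Per-mask deterministic reconstruction error bound:
if `x̂ = (W ⊙ M̂)⁻¹ (W ⊙ M) x` with `W ⊙ M̂` invertible, then
`‖x − x̂‖ ≥ (σ_min(W ⊙ (M̂ − M)) / σ_max(W ⊙ M̂)) ‖x‖`. -/
theorem per_mask_reconstruction_error_lower_bound {n : ℕ}
    (W M Mhat : Matrix (Fin n) (Fin n) ℝ)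
    (hinv : IsUnit (W ⊙ Mhat))
    (x : Fin n → ℝ)
    (xhat : Fin n → ℝ)
    (hxhat : xhat = (W ⊙ Mhat)⁻¹ *ᵥ ((W ⊙ M) *ᵥ x)) :
    euclNorm (x - xhat) ≥
      (sigmaMin (W ⊙ (Mhat - M)) / sigmaMax (W ⊙ Mhat)) * euclNorm x := by
  rw [hxhat, Matrix.hadamard_sub]
  exact sigmaMin_sub_div_sigmaMax_mul_le_euclNorm_sub _ _ hinv x
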